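/- arXiv:2102.07278 — 2 statements merged into one kernel-verified Lean document; each statement's English description precedes it below -/
import Mathlib

section
/- Let X be a Hilbert space and χ : ℝ → ℝ non-decreasing with χ(0)=0 and χ(τ)τ ≥ 0. Suppose v ∈ X (a space of measurable functions on ℝ^N vanishing outside Ω with nonlocal energy E) satisfies the weak formulation E(v,ψ) + (χ(v),ψ)_{L²(Ω)} = (f,ψ)_{L²(Ω)} for all ψ ∈ X, with f ∈ L²(Ω), and that for each ℓ the truncation v̄_ℓ and χ(v̄_ℓ) lie in X with E(v, χ(v̄_ℓ)) ≥ 0. Then ‖χ(v̄_ℓ)‖_{L²(Ω)} ≤ ‖f‖_{L²(Ω)} for every ℓ, and consequently, by Fatou's lemma, ‖χ(v)‖_{L²(Ω)} ≤ ‖f‖_{L²(Ω)}. -/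
open MeasureTheory
open scoped InnerProductSpace

private lemma chi_ptwise (χ : ℝ → ℝ) (hχmono : Monotone χ) (hχ0 : χ 0 = 0) (ℓ t : ℝ)
    (hℓ : 1 ≤ ℓ) :
    χ (max (-ℓ) (min ℓ t)) * χ (max (-ℓ) (min ℓ t)) ≤ χ t * χ (max (-ℓ) (min ℓ t)) := by
  set s := max (-ℓ) (min ℓ t) with hs
  rcases le_total t (-ℓ) with h1 | h1
  · have hst : s = -ℓ := by
      rw [hs, min_eq_right (h1.trans (by linarith)), max_eq_left h1]
    have hs0 : χ s ≤ 0 := hst ▸ (hχ0 ▸ hχmono (by linarith : -ℓ ≤ (0:ℝ)))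
    have hts : χ t ≤ χ s := hχmono (hst ▸ h1)
    nlinarith
  rcases le_total ℓ t with h2 | h2
  · have hst : s = ℓ := by
      rw [hs, min_eq_left h2, max_eq_right (by linarith : -ℓ ≤ ℓ)]
    have hs0 : 0 ≤ χ s := hst ▸ (hχ0 ▸ hχmono (by linarith : (0:ℝ) ≤ ℓ))
    have hts : χ s ≤ χ t := hχmono (hst ▸ h2)
    nlinarith
  · have hst : s = t := by rw [hs, min_eq_right h2, max_eq_right h1]
    rw [hst]

/-- estimate `‖χ(v)‖_{L²} ≤ ‖f‖_{L²}`.  `X` is a Hilbert space of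
functions vanishing outside `Ω` with nonlocal energy `E = ⟪·,·⟫`, embedded in
`L²` by `ι`; `χ` is non-decreasing with `χ 0 = 0`, `χ(τ)τ ≥ 0`, acting through
the composition operator `Nχ`.  `v` satisfies the weak formulation
`E(v,ψ) + (χ(v),ψ)_{L²} = (f,ψ)_{L²}` for all `ψ ∈ X`, and for each level
`ℓ ≥ 1` the truncation `v̄_ℓ` and `χ(v̄_ℓ)` belong to `X` with
`E(v, χ(v̄_ℓ)) ≥ 0`.  Then `‖χ(v̄_ℓ)‖_{L²} ≤ ‖f‖_{L²}` for each `ℓ` and, by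
Fatou, `‖χ(v)‖_{L²} ≤ ‖f‖_{L²}`. -/
theorem stmt_8 {α : Type*} [MeasurableSpace α] (μ : Measure α)
    {X : Type*} [NormedAddCommGroup X] [InnerProductSpace ℝ X] [CompleteSpace X]
    (ι : X →L[ℝ] Lp ℝ 2 μ)
    (χ : ℝ → ℝ) (hχmono : Monotone χ) (hχ0 : χ 0 = 0)
    (hχsign : ∀ τ, 0 ≤ χ τ * τ)
    (v : X) (Nv : Lp ℝ 2 μ)
    (hNv : (Nv : α → ℝ) =ᵐ[μ] fun x => χ ((ι v : α → ℝ) x))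
    (f : Lp ℝ 2 μ)
    (hweak : ∀ ψ : X, ⟪v, ψ⟫_ℝ + ⟪Nv, ι ψ⟫_ℝ = ⟪f, ι ψ⟫_ℝ)
    (vbar w : ℝ → X)
    (hvbar : ∀ ℓ ≥ (1:ℝ),
      (ι (vbar ℓ) : α → ℝ) =ᵐ[μ] fun x => max (-ℓ) (min ℓ ((ι v : α → ℝ) x)))
    (hw : ∀ ℓ ≥ (1:ℝ),
      (ι (w ℓ) : α → ℝ) =ᵐ[μ] fun x => χ (max (-ℓ) (min ℓ ((ι v : α → ℝ) x))))
    (hEpos : ∀ ℓ ≥ (1:ℝ), 0 ≤ ⟪v, w ℓ⟫_ℝ) :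
    (∀ ℓ ≥ (1:ℝ), ‖ι (w ℓ)‖ ≤ ‖f‖) ∧ ‖Nv‖ ≤ ‖f‖ := by
  have key : ∀ ℓ ≥ (1:ℝ), ‖ι (w ℓ)‖ ≤ ‖f‖ := by
    intro ℓ hℓ
    -- pointwise a.e. inequality (w ℓ)² ≤ Nv * (w ℓ)
    have hae : ∀ᵐ x ∂μ, (ι (w ℓ) : α → ℝ) x * (ι (w ℓ) : α → ℝ) x
        ≤ (Nv : α → ℝ) x * (ι (w ℓ) : α → ℝ) x := by
      filter_upwards [hNv, hw ℓ hℓ] with x h1 h2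
      rw [h1, h2]
      exact chi_ptwise χ hχmono hχ0 ℓ _ hℓ
    have hint1 : ⟪ι (w ℓ), ι (w ℓ)⟫_ℝ ≤ ⟪Nv, ι (w ℓ)⟫_ℝ := by
      rw [L2.inner_def, L2.inner_def]
      refine integral_mono_ae (L2.integrable_inner _ _) (L2.integrable_inner _ _) ?_
      filter_upwards [hae] with x hx
      simp [RCLike.inner_apply, conj_trivial]
      nlinarith [hx]
    have hle2 : ⟪Nv, ι (w ℓ)⟫_ℝ ≤ ⟪f, ι (w ℓ)⟫_ℝ := by
      have := hweak (w ℓ)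
      have := hEpos ℓ hℓ
      linarith
    have hle3 : ⟪f, ι (w ℓ)⟫_ℝ ≤ ‖f‖ * ‖ι (w ℓ)‖ := real_inner_le_norm f _
    have hsq : ‖ι (w ℓ)‖ ^ 2 ≤ ‖f‖ * ‖ι (w ℓ)‖ := by
      rw [← real_inner_self_eq_norm_sq]
      linarith
    rcases eq_or_lt_of_le (norm_nonneg (ι (w ℓ))) with h0 | h0
    · rw [← h0]; exact norm_nonneg f
    · nlinarith
  refine ⟨key, ?_⟩
  -- Fatou part
  have hg : ∀ n : ℕ, AEStronglyMeasurable (fun x => (ι (w (n+1)) : α → ℝ) x) μ :=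
    fun n => (Lp.aestronglyMeasurable _)
  have hℓn : ∀ n : ℕ, (1:ℝ) ≤ (n:ℝ) + 1 := fun n => by have h : (0:ℝ) ≤ n := Nat.cast_nonneg n; linarith
  have htend : ∀ᵐ x ∂μ, Filter.Tendsto (fun n : ℕ => (ι (w (n+1)) : α → ℝ) x)
      Filter.atTop (nhds ((Nv : α → ℝ) x)) := by
    have hall : ∀ᵐ x ∂μ, ∀ n : ℕ,
        (ι (w ((n:ℝ)+1)) : α → ℝ) x = χ (max (-((n:ℝ)+1)) (min ((n:ℝ)+1) ((ι v : α → ℝ) x))) := by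
      rw [MeasureTheory.ae_all_iff]
      exact fun n => hw _ (hℓn n)
    filter_upwards [hall, hNv] with x hx hNx
    refine Filter.Tendsto.congr' ?_ tendsto_const_nhds
    obtain ⟨N, hN⟩ := exists_nat_ge (|(ι v : α → ℝ) x|)
    rw [Filter.eventuallyEq_iff_exists_mem]
    refine ⟨Set.Ici N, Filter.mem_atTop N, fun n hn => ?_⟩
    have habs : |(ι v : α → ℝ) x| ≤ (n:ℝ) + 1 := by
      have : (N:ℝ) ≤ (n:ℝ) := Nat.cast_le.mpr hn
      linarith
    rw [abs_le] at habs
    show (Nv : α → ℝ) x = (ι (w ((n:ℝ)+1)) : α → ℝ) x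
    rw [hNx, hx n, min_eq_right habs.2, max_eq_right (by linarith [habs.1])]
  have hfat : eLpNorm (Nv : α → ℝ) 2 μ ≤
      Filter.atTop.liminf fun n : ℕ => eLpNorm (fun x => (ι (w (n+1)) : α → ℝ) x) 2 μ :=
    Lp.eLpNorm_lim_le_liminf_eLpNorm hg _ htend
  have hbound : ∀ n : ℕ, eLpNorm (fun x => (ι (w (n+1)) : α → ℝ) x) 2 μ
      ≤ ENNReal.ofReal ‖f‖ := by
    intro n
    have h1 : eLpNorm (fun x => (ι (w ((n:ℝ)+1)) : α → ℝ) x) 2 μ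
        = ENNReal.ofReal ‖ι (w ((n:ℝ)+1))‖ := by
      rw [Lp.norm_def, ENNReal.ofReal_toReal (Lp.eLpNorm_ne_top _)]
    rw [h1]
    exact ENNReal.ofReal_le_ofReal (key _ (hℓn n))
  have hlim : (Filter.atTop.liminf fun n : ℕ =>
      eLpNorm (fun x => (ι (w (n+1)) : α → ℝ) x) 2 μ) ≤ ENNReal.ofReal ‖f‖ := by
    calc _ ≤ Filter.atTop.liminf (fun _ : ℕ => ENNReal.ofReal ‖f‖) :=
          Filter.liminf_le_liminf (Filter.Eventually.of_forall hbound)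
      _ = ENNReal.ofReal ‖f‖ := Filter.liminf_const _
  have : eLpNorm (Nv : α → ℝ) 2 μ ≤ ENNReal.ofReal ‖f‖ := hfat.trans hlim
  rw [Lp.norm_def]
  calc (eLpNorm (Nv : α → ℝ) 2 μ).toReal ≤ (ENNReal.ofReal ‖f‖).toReal :=
        ENNReal.toReal_mono ENNReal.ofReal_ne_top this
    _ = ‖f‖ := ENNReal.toReal_ofReal (norm_nonneg f)
end

section
/- Let ρ : [0,T] → [0,∞) be absolutely continuous, non-decreasing, with ρ(0) = 0, satisfying ρ'(t) ≤ 2a·ρ(T)^{1/2}·ρ(t)^{1/2} for a.e. t ∈ [0,T], where a > 0. Then ρ(t)^{1/2} ≤ a·t·ρ(T)^{1/2} for all t ∈ [0,T]; in particular if aT < 1 then ρ(T) = 0. -/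
open MeasureTheory intervalIntegral Set

/-- Gronwall-type lemma.  If `ρ : [0,T] → [0,∞)` is absolutely
continuous (written `ρ t = ∫₀ᵗ g`), non-decreasing, with `ρ 0 = 0` and
`ρ' = g ≤ 2a √(ρ T) √(ρ t)` a.e., then `√(ρ t) ≤ a t √(ρ T)` on `[0,T]`;
in particular `a T < 1` implies `ρ T = 0`. -/
theorem stmt_17 (T a : ℝ) (hT : 0 < T) (ha : 0 < a) (ρ g : ℝ → ℝ)
    (hρnn : ∀ t ∈ Icc 0 T, 0 ≤ ρ t) (hρmono : MonotoneOn ρ (Icc 0 T))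
    (hρ0 : ρ 0 = 0)
    (hgint : IntervalIntegrable g volume 0 T)
    (hAC : ∀ t ∈ Icc 0 T, ρ t = ∫ s in (0:ℝ)..t, g s)
    (hg : ∀ᵐ s ∂(volume.restrict (Icc 0 T)),
      g s ≤ 2 * a * Real.sqrt (ρ T) * Real.sqrt (ρ s)) :
    (∀ t ∈ Icc 0 T, Real.sqrt (ρ t) ≤ a * t * Real.sqrt (ρ T)) ∧
      (a * T < 1 → ρ T = 0) := by
  have hTmem : T ∈ Icc (0:ℝ) T := ⟨hT.le, le_rfl⟩
  have hρT0 : 0 ≤ ρ T := hρnn T hTmem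
  -- main part
  have main : ∀ t ∈ Icc 0 T, Real.sqrt (ρ t) ≤ a * t * Real.sqrt (ρ T) := by
    by_cases hρT : ρ T = 0
    · intro t ht
      have h1 : ρ t ≤ ρ T := hρmono ht hTmem ht.2
      have h2 : ρ t = 0 := le_antisymm (hρT ▸ h1) (hρnn t ht)
      rw [h2, hρT, Real.sqrt_zero, mul_zero]
    · have hρTpos : 0 < ρ T := lt_of_le_of_ne hρT0 (Ne.symm hρT)
      set Λ := Real.sqrt (ρ T) with hΛ
      have hΛpos : 0 < Λ := Real.sqrt_pos.2 hρTpos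
      set b : ℝ := 2 * a * Λ with hb
      have hbpos : 0 < b := by positivity
      set σ : ℝ → ℝ := fun s => Real.sqrt (ρ s) with hσ
      set F : ℝ → ℝ := fun u => ∫ s in (0:ℝ)..u, σ s with hF
      have huIcc : uIcc (0:ℝ) T = Icc 0 T := uIcc_of_le hT.le
      -- continuity of ρ on [0,T]
      have hρcont : ContinuousOn ρ (Icc 0 T) := by
        have := continuousOn_primitive_interval' hgint (left_mem_uIcc (a := (0:ℝ)) (b := T))
        rw [huIcc] at this
        exact this.congr hAC
      have hσcont : ContinuousOn σ (Icc 0 T) :=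
        Real.continuous_sqrt.comp_continuousOn hρcont
      have hσint : ∀ u ∈ Icc (0:ℝ) T, IntervalIntegrable σ volume 0 u := by
        intro u hu
        refine (hσcont.mono ?_).intervalIntegrable
        rw [uIcc_of_le hu.1]
        exact Icc_subset_Icc le_rfl hu.2
      -- key integral inequality : ρ t ≤ b * F t
      have key : ∀ t ∈ Icc (0:ℝ) T, ρ t ≤ b * F t := by
        intro t ht
        have hsub : Icc (0:ℝ) t ⊆ Icc 0 T := Icc_subset_Icc le_rfl ht.2
        have hae : g ≤ᵐ[volume.restrict (Icc (0:ℝ) t)] fun s => b * σ s := by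
          refine ae_restrict_of_ae_restrict_of_subset hsub ?_
          filter_upwards [hg] with s hs using hs
        have hg' : IntervalIntegrable g volume 0 t := by
          apply hgint.mono_set
          rw [uIcc_of_le ht.1, huIcc]
          exact hsub
        have hbσ : IntervalIntegrable (fun s => b * σ s) volume 0 t :=
          (hσint t ht).const_mul b
        calc ρ t = ∫ s in (0:ℝ)..t, g s := hAC t ht
          _ ≤ ∫ s in (0:ℝ)..t, b * σ s :=
            intervalIntegral.integral_mono_ae_restrict ht.1 hg' hbσ hae
          _ = b * F t := intervalIntegral.integral_const_mul b σ
      -- σ t ≤ √b √(F t)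
      have hFnn : ∀ t ∈ Icc (0:ℝ) T, 0 ≤ F t := by
        intro t ht
        have := key t ht
        have h0 : 0 ≤ ρ t := hρnn t ht
        nlinarith
      have hσle : ∀ t ∈ Icc (0:ℝ) T, σ t ≤ Real.sqrt b * Real.sqrt (F t) := by
        intro t ht
        rw [← Real.sqrt_mul hbpos.le]
        exact Real.sqrt_le_sqrt (key t ht)
      -- continuity of F, derivative of F
      have hFcont : ContinuousOn F (Icc 0 T) := by
        have := continuousOn_primitive_interval' (hσint T hTmem)
          (left_mem_uIcc (a := (0:ℝ)) (b := T))
        rwa [huIcc] at this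
      have hFderiv : ∀ x ∈ Ico (0:ℝ) T, HasDerivWithinAt F (σ x) (Ici x) x := by
        intro x hx
        have hxmem : x ∈ Icc (0:ℝ) T := ⟨hx.1, hx.2.le⟩
        have hIccmem : Icc (0:ℝ) T ∈ nhdsWithin x (Ici x) := by
          refine mem_nhdsWithin.2 ⟨Iio T, isOpen_Iio, hx.2, ?_⟩
          intro y hy
          exact ⟨le_trans hx.1 hy.2, le_of_lt hy.1⟩
        have hIccmem' : Icc (0:ℝ) T ∈ nhdsWithin x (Ioi x) :=
          nhdsWithin_mono x Ioi_subset_Ici_self hIccmem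
        refine intervalIntegral.integral_hasDerivWithinAt_right (s := Ici x) (t := Ioi x)
          (hσint x hxmem)
          ⟨Icc (0:ℝ) T, hIccmem', hσcont.aestronglyMeasurable measurableSet_Icc⟩ ?_
        exact (hσcont x hxmem).mono_of_mem_nhdsWithin hIccmem'
      -- fencing : ∀ ε > 0, F t ≤ ((√b/2+ε) t + ε)^2
      have fence : ∀ ε > 0, ∀ t ∈ Icc (0:ℝ) T,
          F t ≤ ((Real.sqrt b / 2 + ε) * t + ε) ^ 2 := by
        intro ε hε
        set c : ℝ := Real.sqrt b / 2 + ε with hc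
        have hcpos : 0 < c := by positivity
        have hBderiv : ∀ x : ℝ, HasDerivAt (fun x => (c * x + ε) ^ 2)
            (2 * c * (c * x + ε)) x := by
          intro x
          have h1 : HasDerivAt (fun x => c * x + ε) c x := by
            simpa using ((hasDerivAt_id x).const_mul c).add_const ε
          have := h1.fun_pow 2
          refine this.congr_deriv ?_
          ring
        intro t ht
        refine image_le_of_deriv_right_lt_deriv_boundary hFcont hFderiv ?_ hBderiv ?_ ht
        · have h0 : F 0 = 0 := intervalIntegral.integral_same
          rw [h0]
          show (0:ℝ) ≤ (c * 0 + ε) ^ 2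
          positivity
        · intro x hx hFB
          have hxmem : x ∈ Icc (0:ℝ) T := ⟨hx.1, hx.2.le⟩
          have hlin : 0 < c * x + ε := by
            have := mul_nonneg hcpos.le hx.1
            linarith
          have h1 : σ x ≤ Real.sqrt b * (c * x + ε) := by
            have := hσle x hxmem
            rw [hFB, Real.sqrt_sq hlin.le] at this
            exact this
          have h2 : Real.sqrt b * (c * x + ε) < 2 * c * (c * x + ε) := by
            have hsb : Real.sqrt b < 2 * c := by
              rw [hc]; linarith
            exact mul_lt_mul_of_pos_right hsb hlin
          exact lt_of_le_of_lt h1 h2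
      -- take ε → 0⁺ : F t ≤ (√b/2 * t)^2
      have Fle : ∀ t ∈ Icc (0:ℝ) T, F t ≤ (Real.sqrt b / 2 * t) ^ 2 := by
        intro t ht
        have htend : Filter.Tendsto (fun ε : ℝ => ((Real.sqrt b / 2 + ε) * t + ε) ^ 2)
            (nhdsWithin 0 (Ioi 0)) (nhds ((Real.sqrt b / 2 * t) ^ 2)) := by
          have hcont : Continuous fun ε : ℝ => ((Real.sqrt b / 2 + ε) * t + ε) ^ 2 :=
            (((continuous_const.add continuous_id).mul continuous_const).add
              continuous_id).pow 2
          have := hcont.tendsto 0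
          simp only [add_zero] at this
          exact this.mono_left nhdsWithin_le_nhds
        refine ge_of_tendsto htend ?_
        filter_upwards [self_mem_nhdsWithin] with ε hε
        exact fence ε hε t ht
      -- conclude
      intro t ht
      have h1 : ρ t ≤ b * (Real.sqrt b / 2 * t) ^ 2 :=
        le_trans (key t ht) (mul_le_mul_of_nonneg_left (Fle t ht) hbpos.le)
      have hsqb : Real.sqrt b ^ 2 = b := Real.sq_sqrt hbpos.le
      have heq : b * (Real.sqrt b / 2 * t) ^ 2 = (a * t * Λ) ^ 2 := by
        calc b * (Real.sqrt b / 2 * t) ^ 2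
            = b * Real.sqrt b ^ 2 * t ^ 2 / 4 := by ring
          _ = b * b * t ^ 2 / 4 := by rw [hsqb]
          _ = (a * t * Λ) ^ 2 := by rw [hb]; ring
      have h2 : ρ t ≤ (a * t * Λ) ^ 2 := heq ▸ h1
      have h3 : 0 ≤ a * t * Λ := by
        have := ht.1; positivity
      calc Real.sqrt (ρ t) ≤ Real.sqrt ((a * t * Λ) ^ 2) := Real.sqrt_le_sqrt h2
        _ = a * t * Λ := Real.sqrt_sq h3
  refine ⟨main, fun haT => ?_⟩
  by_contra hne
  have hρTpos : 0 < ρ T := lt_of_le_of_ne hρT0 (Ne.symm hne)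
  have hs : 0 < Real.sqrt (ρ T) := Real.sqrt_pos.2 hρTpos
  have := main T hTmem
  nlinarith
end
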